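/- The semiring S = M₂(ℝ⁺) is not left Noetherian: the left ideals N_{≥ 1/m} = { [[a,p],[b,q]] : p ≥ a/m, q ≥ b/m } form a strictly ascending non-terminating chain N_{≥1} ⊊ N_{≥1/2} ⊊ N_{≥1/3} ⊊ ⋯, and not left Artinian: the left ideals N_{≥ m} form a strictly descending non-terminating chain. -/

import Mathlib

/-- The 2×2 matrix semiring over the nonnegative reals. -/
abbrev M2 : Type := Matrix (Fin 2) (Fin 2) NNReal

/-- A subset of the semiring is a left ideal. -/
def IsLeftIdeal (I : Set M2) : Prop :=
  0 ∈ I ∧ (∀ x ∈ I, ∀ y ∈ I, x + y ∈ I) ∧ ∀ s : M2, ∀ x ∈ I, s * x ∈ I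

/-- `N_{≥r} = { [[a,p],[b,q]] : p ≥ ra, q ≥ rb }`. -/
def Nge (r : NNReal) : Set M2 := {A | r * A 0 0 ≤ A 0 1 ∧ r * A 1 0 ≤ A 1 1}

/-! `N_{≥r}` says that the second column dominates `r` times the first; left multiplication by a
matrix with nonnegative entries acts columnwise and preserves this. The map `r ↦ N_{≥r}` is
strictly antitone (`[[1,r],[0,0]]` separates), so `1/m` and `m` give the two chains. -/

lemma isLeftIdeal_Nge (r : NNReal) : IsLeftIdeal (Nge r) := by
  refine ⟨⟨by simp, by simp⟩, ?_, ?_⟩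
  · rintro x ⟨hx₀, hx₁⟩ y ⟨hy₀, hy₁⟩
    simp only [Nge, Set.mem_ofPred_eq, Matrix.add_apply, mul_add]
    exact ⟨add_le_add hx₀ hy₀, add_le_add hx₁ hy₁⟩
  · rintro s x ⟨hx₀, hx₁⟩
    constructor <;>
    · simp only [Matrix.mul_apply, Fin.sum_univ_two, mul_add]
      apply add_le_add <;> rw [mul_left_comm] <;> gcongr

lemma Nge_antitone : Antitone Nge := by
  rintro r r' h A ⟨h₀, h₁⟩
  exact ⟨le_trans (by gcongr) h₀, le_trans (by gcongr) h₁⟩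

lemma row_mem_Nge_iff {r p : NNReal} : !![1, p; 0, 0] ∈ Nge r ↔ r ≤ p := by
  simp [Nge]

lemma Nge_strictAnti : StrictAnti Nge := fun _ _ h =>
  (Set.ssubset_iff_of_subset (Nge_antitone h.le)).2
    ⟨_, row_mem_Nge_iff.2 le_rfl, fun hmem => (row_mem_Nge_iff.1 hmem).not_gt h⟩

/-- `S = M₂(ℝ⁺)` is not left Noetherian: the left ideals `N_{≥1/m}` form a
strictly ascending non-terminating chain `N_{≥1} ⊊ N_{≥1/2} ⊊ ⋯`; and not left Artinian:
the left ideals `N_{≥m}` form a strictly descending non-terminating chain. -/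
theorem stmt_12 :
    (∀ r : NNReal, IsLeftIdeal (Nge r)) ∧
    (∀ m : ℕ, Nge (1 / ((m : NNReal) + 1)) ⊂ Nge (1 / ((m : NNReal) + 2))) ∧
    (∀ m : ℕ, Nge ((m : NNReal) + 2) ⊂ Nge ((m : NNReal) + 1)) := by
  refine ⟨isLeftIdeal_Nge, fun m => Nge_strictAnti ?_, fun m => Nge_strictAnti ?_⟩ <;>
  · gcongr
    norm_num
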